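/- Let r ≥ 2 be an integer. The (r−1)² matrices C(0,q) for 0 ≤ q ≤ r−2, together with C(p,q) for 1 ≤ p ≤ r−2 and −r+p+2 ≤ q ≤ r−p−1, form a basis of the complex vector space of all (r−1)×(r−1) complex matrices. -/

import Mathlib

open Complex Matrix

/-- `t = exp(iπ/(2r))`. -/
noncomputable def tconst (r : ℕ) : ℂ := Complex.exp (Real.pi * Complex.I / (2 * r))

/-- `ε(k,j) = 1` if `j ≡ k (mod 2r)`, `−1` if `j ≡ −k (mod 2r)`, `0` otherwise. -/
def eps (r : ℕ) (k j : ℤ) : ℤ :=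
  if (2 * (r : ℤ)) ∣ (j - k) then 1 else if (2 * (r : ℤ)) ∣ (j + k) then -1 else 0

/-- The matrix of the Weyl quantization of `2 cos 2π(px+qy)` in the basis `ζ_1, …, ζ_{r−1}`:
`C(p,q)_{k,m} = t^{−pq} (t^{2qm} ε(k, m−p) + t^{−2qm} ε(k, m+p))`, with indices shifted so that
the index `k : Fin (r-1)` corresponds to `k+1 ∈ {1, …, r−1}`. -/
noncomputable def Cmat (r : ℕ) (p q : ℤ) : Matrix (Fin (r - 1)) (Fin (r - 1)) ℂ :=
  Matrix.of fun k m =>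
    tconst r ^ (-(p * q)) *
      (tconst r ^ (2 * q * ((m : ℤ) + 1)) * (eps r ((k : ℤ) + 1) (((m : ℤ) + 1) - p) : ℂ) +
       tconst r ^ (-(2 * q * ((m : ℤ) + 1))) * (eps r ((k : ℤ) + 1) (((m : ℤ) + 1) + p) : ℂ))

/-- The quantized integer `[n] = sin(nπ/r)/sin(π/r)`. -/
noncomputable def qint (r : ℕ) (n : ℤ) : ℝ :=
  Real.sin (n * Real.pi / r) / Real.sin (Real.pi / r)

/-- The index set of the claimed basis: pairs `(p,q)` with `p = 0, 0 ≤ q ≤ r−2`, or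
`1 ≤ p ≤ r−2, −r+p+2 ≤ q ≤ r−p−1`. -/
def BasisIdx (r : ℕ) : Type :=
  { pq : ℤ × ℤ // (pq.1 = 0 ∧ 0 ≤ pq.2 ∧ pq.2 ≤ (r : ℤ) - 2) ∨
      (1 ≤ pq.1 ∧ pq.1 ≤ (r : ℤ) - 2 ∧ -(r : ℤ) + pq.1 + 2 ≤ pq.2 ∧ pq.2 ≤ (r : ℤ) - pq.1 - 1) }

/-! Write `t = tconst r`, a primitive `4r`-th root of unity. The entry `(k, m)` of `C(p, q)` can be
nonzero only if `|m - k| = p` or `k + m ∈ {p, 2r - p}`, so on the `p`-th off-diagonal only the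
matrices `C(p', q)` with `p' ≥ p` contribute. In a vanishing combination `∑ c(p, q) C(p, q)` take
`p` maximal with some `c(p, q) ≠ 0`. The entries `(k, k + p)` and `(k + p, k)` then say that the
Laurent polynomial `∑_q c(p, q) z^q` vanishes at the `2(r - 1 - p)` distinct points `t^(±(p + 2k))`,
although its exponents span fewer than `2(r - 1 - p)` values; for `p = 0` the diagonal entries
`∑_q c(0, q) (t^(2qk) + t^(-2qk))` give the same for `c(0, q) + c(0, -q)`. So the `(r - 1)^2`
matrices are linearly independent, hence a basis.
-/

open Finset

open Polynomial in
theorem eq_zero_of_sum_mul_zpow_eq_zero {K : Type*} [Field K] {d : ℤ → K} {a b : ℤ}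
    {Z : Finset K} (hZ : (0 : K) ∉ Z) (hcard : b - a < #Z)
    (h : ∀ z ∈ Z, ∑ q ∈ Icc a b, d q * z ^ q = 0) : ∀ q ∈ Icc a b, d q = 0 := by
  intro q₀ hq₀
  have hab := mem_Icc.1 hq₀
  set P : K[X] := ∑ q ∈ Icc a b, C (d q) * X ^ (q - a).toNat
  have hcoeff : ∀ q ∈ Icc a b, P.coeff (q - a).toNat = d q := by
    intro q hq
    rw [finsetSum_coeff, sum_eq_single_of_mem q hq]
    · rw [coeff_C_mul_X_pow, if_pos rfl]
    · intro q' hq' hne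
      rw [mem_Icc] at hq hq'
      rw [coeff_C_mul_X_pow, if_neg (by omega)]
  have heval : ∀ z ≠ 0, z ^ a * P.eval z = ∑ q ∈ Icc a b, d q * z ^ q := by
    intro z hz
    rw [eval_finsetSum, mul_sum]
    refine sum_congr rfl fun q hq => ?_
    rw [mem_Icc] at hq
    rw [eval_mul, eval_C, eval_pow, eval_X, ← zpow_natCast, Int.toNat_of_nonneg (by omega),
      mul_left_comm, ← zpow_add₀ hz, add_sub_cancel]
  have hP : P = 0 := by
    refine eq_zero_of_natDegree_lt_card_of_eval_eq_zero' P Z (fun z hz => ?_) ?_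
    · have hz0 : z ≠ 0 := ne_of_mem_of_not_mem hz hZ
      have := heval z hz0
      rw [h z hz] at this
      exact (mul_eq_zero.1 this).resolve_left (zpow_ne_zero a hz0)
    · refine (natDegree_sum_le_of_forall_le _ _ fun q hq => ?_).trans_lt
        (show (b - a).toNat < #Z by omega)
      rw [mem_Icc] at hq
      exact (natDegree_C_mul_X_pow_le _ _).trans (by omega)
  rw [← hcoeff q₀ hq₀, hP, coeff_zero]

variable {r : ℕ}

theorem tconst_ne_zero : tconst r ≠ 0 := Complex.exp_ne_zero _

theorem tconst_isPrimitiveRoot (hr : 0 < r) : IsPrimitiveRoot (tconst r) (4 * r) := by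
  convert Complex.isPrimitiveRoot_exp (4 * r) (by omega) using 1
  rw [tconst]
  congr 1
  push_cast
  field_simp
  ring

theorem tconst_zpow_injOn (hr : 0 < r) :
    Set.InjOn (tconst r ^ ·) (Set.Ioo (-(2 * r : ℤ)) (2 * r)) := by
  intro a ⟨ha, ha'⟩ b ⟨hb, hb'⟩ hab
  dsimp only at hab
  have h1 : tconst r ^ (a - b) = 1 := by
    rw [zpow_sub₀ tconst_ne_zero, hab, div_self (zpow_ne_zero _ tconst_ne_zero)]
  have hdvd := ((tconst_isPrimitiveRoot hr).zpow_eq_one_iff_dvd _).1 h1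
  push_cast at hdvd
  have := Int.eq_zero_of_abs_lt_dvd hdvd (abs_lt.2 ⟨by omega, by omega⟩)
  omega

/-- `t^(p + 2j)` for `1 ≤ j ≤ r - 1 - p` comes from the entry `(j, j + p)`, and for
`1 - r ≤ j ≤ -p - 1` it is `t^(-(p + 2k))`, `k = -j - p`, coming from the entry `(k + p, k)`. -/
noncomputable def diagRoots (r : ℕ) (p : ℤ) : Finset ℂ :=
  (Icc (1 - r : ℤ) (-p - 1) ∪ Icc 1 (r - 1 - p)).image fun j => tconst r ^ (p + 2 * j)

theorem zero_notMem_diagRoots (p : ℤ) : (0 : ℂ) ∉ diagRoots r p := by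
  simp only [diagRoots, mem_image, not_exists, not_and]
  exact fun _ _ => zpow_ne_zero _ tconst_ne_zero

theorem card_diagRoots {p : ℤ} (hp : 0 ≤ p) (hpr : p < r) :
    (#(diagRoots r p) : ℤ) = 2 * (r - 1 - p) := by
  rw [diagRoots, card_image_of_injOn, card_union_of_disjoint, Int.card_Icc, Int.card_Icc]
  · omega
  · exact disjoint_left.2 fun j h₁ h₂ => by rw [mem_Icc] at h₁ h₂; omega
  · intro i hi j hj hij
    simp only [coe_union, coe_Icc, Set.mem_union, Set.mem_Icc] at hi hj
    have := tconst_zpow_injOn (by omega) ⟨by omega, by omega⟩ ⟨by omega, by omega⟩ hij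
    omega

theorem eps_self (k : ℤ) : eps r k k = 1 := by simp [eps]

theorem eps_eq_zero {k j : ℤ} (h₁ : j - k ≠ 0) (h₂ : j + k ≠ 0)
    (h₁' : j - k ∈ Set.Ioo (-(2 * r : ℤ)) (2 * r)) (h₂' : j + k ∈ Set.Ioo (-(2 * r : ℤ)) (2 * r)) :
    eps r k j = 0 := by
  have not_dvd : ∀ x : ℤ, x ≠ 0 → x ∈ Set.Ioo (-(2 * r : ℤ)) (2 * r) → ¬ (2 * r : ℤ) ∣ x :=
    fun x hx hb hdvd => hx (Int.eq_zero_of_abs_lt_dvd hdvd (abs_lt.2 hb))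
  rw [eps, if_neg (not_dvd _ h₁ h₁'), if_neg (not_dvd _ h₂ h₂')]

noncomputable def Centry (r : ℕ) (p q k m : ℤ) : ℂ :=
  tconst r ^ (-(p * q)) *
    (tconst r ^ (2 * q * m) * (eps r k (m - p) : ℂ) +
     tconst r ^ (-(2 * q * m)) * (eps r k (m + p) : ℂ))

theorem Cmat_apply (p q : ℤ) (k m : Fin (r - 1)) :
    Cmat r p q k m = Centry r p q ((k : ℤ) + 1) ((m : ℤ) + 1) := rfl

theorem Centry_eq_zero {p q k m : ℤ} (hp : 0 ≤ p) (hk : 1 ≤ k) (hk' : k ≤ r - 1) (hm : 1 ≤ m)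
    (hm' : m ≤ r - 1) (hkm : p < m - k ∨ p < k - m) : Centry r p q k m = 0 := by
  rw [Centry,
    eps_eq_zero (j := m - p) (by omega) (by omega) ⟨by omega, by omega⟩ ⟨by omega, by omega⟩,
    eps_eq_zero (j := m + p) (by omega) (by omega) ⟨by omega, by omega⟩ ⟨by omega, by omega⟩]
  simp

theorem Centry_of_eq_add {p q k m : ℤ} (hp : 1 ≤ p) (hk : 1 ≤ k) (hm : m = k + p)
    (hm' : m ≤ r - 1) : Centry r p q k m = tconst r ^ (q * (k + m)) := by
  rw [Centry, show m - p = k by omega, eps_self,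
    eps_eq_zero (j := m + p) (by omega) (by omega) ⟨by omega, by omega⟩ ⟨by omega, by omega⟩]
  simp only [Int.cast_one, Int.cast_zero, mul_one, mul_zero, add_zero, ← zpow_add₀ tconst_ne_zero]
  congr 1
  subst hm
  ring

theorem Centry_of_eq_add' {p q k m : ℤ} (hp : 1 ≤ p) (hm : 1 ≤ m) (hk : k = m + p)
    (hk' : k ≤ r - 1) : Centry r p q k m = tconst r ^ (-(q * (k + m))) := by
  rw [Centry, show m + p = k by omega, eps_self,
    eps_eq_zero (j := m - p) (by omega) (by omega) ⟨by omega, by omega⟩ ⟨by omega, by omega⟩]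
  simp only [Int.cast_one, Int.cast_zero, mul_one, mul_zero, zero_add, ← zpow_add₀ tconst_ne_zero]
  congr 1
  subst hk
  ring

theorem Centry_zero_self (q k : ℤ) :
    Centry r 0 q k k = tconst r ^ (2 * q * k) + tconst r ^ (-(2 * q * k)) := by
  simp [Centry, eps_self]

theorem fiber_eq_zero_of_pos {d : ℤ → ℂ} {p : ℤ} (hp : 1 ≤ p)
    (hd : ∀ q, d q ≠ 0 → p + 2 - r ≤ q ∧ q ≤ r - p - 1)
    (h : ∀ k m : ℤ, 1 ≤ k → k ≤ r - 1 → 1 ≤ m → m ≤ r - 1 → (m - k = p ∨ k - m = p) →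
      ∑ q ∈ Icc (2 - r : ℤ) (r - 2), d q * Centry r p q k m = 0) :
    d = 0 := by
  funext q₀
  by_contra hq₀
  have hb := hd q₀ hq₀
  have hsub : Icc (p + 2 - r) (r - p - 1) ⊆ Icc (2 - r : ℤ) (r - 2) := by
    intro q hq
    rw [mem_Icc] at hq ⊢
    omega
  have hsum : ∀ k m : ℤ, 1 ≤ k → k ≤ r - 1 → 1 ≤ m → m ≤ r - 1 → (m - k = p ∨ k - m = p) →
      ∑ q ∈ Icc (p + 2 - r) (r - p - 1), d q * Centry r p q k m = 0 :=
    fun k m hk hk' hm hm' hkm => (sum_subset hsub fun q _ hq =>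
      by rw [not_ne_iff.1 (mt (hd q) (by rw [mem_Icc] at hq; omega)), zero_mul]).trans
      (h k m hk hk' hm hm' hkm)
  have hroot : ∀ z ∈ diagRoots r p, ∑ q ∈ Icc (p + 2 - r) (r - p - 1), d q * z ^ q = 0 := by
    intro z hz
    obtain ⟨j, hj, rfl⟩ := mem_image.1 hz
    simp_rw [← _root_.zpow_mul]
    rcases mem_union.1 hj with hj | hj <;> rw [mem_Icc] at hj
    · rw [← hsum (-j) (-j - p) (by omega) (by omega) (by omega) (by omega) (by omega)]
      refine sum_congr rfl fun q _ => ?_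
      rw [Centry_of_eq_add' hp (by omega) (by omega) (by omega)]
      ring_nf
    · rw [← hsum j (j + p) (by omega) (by omega) (by omega) (by omega) (by omega)]
      refine sum_congr rfl fun q _ => ?_
      rw [Centry_of_eq_add hp (by omega) rfl (by omega)]
      ring_nf
  refine hq₀ (eq_zero_of_sum_mul_zpow_eq_zero (zero_notMem_diagRoots p) ?_ hroot q₀
    (mem_Icc.2 hb))
  rw [card_diagRoots (by omega) (by omega)]
  omega

theorem fiber_eq_zero_of_zero {d : ℤ → ℂ} (hd : ∀ q, d q ≠ 0 → 0 ≤ q ∧ q ≤ r - 2)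
    (h : ∀ k : ℤ, 1 ≤ k → k ≤ r - 1 →
      ∑ q ∈ Icc (2 - r : ℤ) (r - 2), d q * Centry r 0 q k k = 0) :
    d = 0 := by
  funext q₀
  by_contra hq₀
  have hb := hd q₀ hq₀
  -- `C(0, q) = C(0, -q)`, so only the symmetrization of `d` is seen by the diagonal
  have hsymm : ∀ z : ℂ, ∑ q ∈ Icc (2 - r : ℤ) (r - 2), (d q + d (-q)) * z ^ q =
      ∑ q ∈ Icc (2 - r : ℤ) (r - 2), d q * (z ^ q + z ^ (-q)) := by
    intro z
    simp only [add_mul, mul_add, sum_add_distrib]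
    congr 1
    exact sum_nbij' Neg.neg Neg.neg (fun q hq => by rw [mem_Icc] at hq ⊢; omega)
      (fun q hq => by rw [mem_Icc] at hq ⊢; omega) (fun q _ => neg_neg q)
      (fun q _ => neg_neg q) (fun q _ => by rw [neg_neg])
  have hroot : ∀ z ∈ diagRoots r 0,
      ∑ q ∈ Icc (2 - r : ℤ) (r - 2), (d q + d (-q)) * z ^ q = 0 := by
    intro z hz
    obtain ⟨j, hj, rfl⟩ := mem_image.1 hz
    rw [hsymm]
    rcases mem_union.1 hj with hj | hj <;> rw [mem_Icc] at hj
    · rw [← h (-j) (by omega) (by omega)]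
      refine sum_congr rfl fun q _ => ?_
      rw [Centry_zero_self, add_comm, ← _root_.zpow_mul, ← _root_.zpow_mul]
      ring_nf
    · rw [← h j (by omega) (by omega)]
      refine sum_congr rfl fun q _ => ?_
      rw [Centry_zero_self, ← _root_.zpow_mul, ← _root_.zpow_mul]
      ring_nf
  have hsum := eq_zero_of_sum_mul_zpow_eq_zero (zero_notMem_diagRoots 0)
    (by rw [card_diagRoots le_rfl (by omega)]; omega) hroot q₀ (mem_Icc.2 ⟨by omega, hb.2⟩)
  rcases hb.1.eq_or_lt with h0 | hpos
  · rw [← h0, neg_zero, ← two_mul] at hsum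
    exact hq₀ (h0 ▸ (mul_eq_zero.1 hsum).resolve_left two_ne_zero)
  · rw [not_ne_iff.1 (mt (hd (-q₀)) (by omega)), add_zero] at hsum
    exact hq₀ hsum

noncomputable def basisFinset (r : ℕ) : Finset (ℤ × ℤ) :=
  (Icc 0 (r - 2 : ℤ) ×ˢ Icc (2 - r : ℤ) (r - 2)).filter fun pq =>
    (pq.1 = 0 ∧ 0 ≤ pq.2 ∧ pq.2 ≤ (r : ℤ) - 2) ∨
      (1 ≤ pq.1 ∧ pq.1 ≤ (r : ℤ) - 2 ∧ -(r : ℤ) + pq.1 + 2 ≤ pq.2 ∧ pq.2 ≤ (r : ℤ) - pq.1 - 1)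

theorem mem_basisFinset {x : ℤ × ℤ} : x ∈ basisFinset r ↔
    (x.1 = 0 ∧ 0 ≤ x.2 ∧ x.2 ≤ (r : ℤ) - 2) ∨
      (1 ≤ x.1 ∧ x.1 ≤ (r : ℤ) - 2 ∧ -(r : ℤ) + x.1 + 2 ≤ x.2 ∧ x.2 ≤ (r : ℤ) - x.1 - 1) := by
  simp only [basisFinset, mem_filter, mem_product, mem_Icc]
  omega

noncomputable instance : Fintype (BasisIdx r) :=
  Fintype.subtype (basisFinset r) fun _ => mem_basisFinset

theorem card_basisIdx : Fintype.card (BasisIdx r) = (r - 1) * (r - 1) := by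
  rw [show Fintype.card (BasisIdx r) = #(basisFinset r) from Fintype.subtype_card _ _]
  -- `(p, q)` is sent to an entry at distance `p` from the diagonal
  have hcard : #(basisFinset r) = #(Icc 1 (r - 1 : ℤ) ×ˢ Icc 1 (r - 1 : ℤ)) := by
    refine card_nbij'
      (fun x => if x.1 = 0 then (x.2 + 1, x.2 + 1)
        else if 1 ≤ x.2 then (x.2, x.2 + x.1) else (1 - x.2 + x.1, 1 - x.2))
      (fun y => if y.1 = y.2 then (0, y.1 - 1)
        else if y.1 < y.2 then (y.2 - y.1, y.1) else (y.1 - y.2, 1 - y.2))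
      ?_ ?_ ?_ ?_
    all_goals
      intro x hx
      simp only [coe_product, coe_Icc, Set.mem_prod, Set.mem_Icc, mem_coe, mem_basisFinset] at hx ⊢
      split_ifs <;> simp only [Prod.ext_iff, true_and, and_true, not_true_eq_false] at * <;> omega
  rw [hcard, card_product, Int.card_Icc, show (r - 1 + 1 - 1 : ℤ).toNat = r - 1 by omega]

theorem sum_basisFinset_eq_sum_fiber {c : ℤ × ℤ → ℂ} {p k m : ℤ}
    (hc : ∀ x ∉ basisFinset r, c x = 0) (hp : 0 ≤ p) (habove : ∀ x : ℤ × ℤ, p < x.1 → c x = 0)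
    (hk : 1 ≤ k) (hk' : k ≤ r - 1) (hm : 1 ≤ m) (hm' : m ≤ r - 1) (hkm : m - k = p ∨ k - m = p) :
    ∑ x ∈ basisFinset r, c x * Centry r x.1 x.2 k m =
      ∑ q ∈ Icc (2 - r : ℤ) (r - 2), c (p, q) * Centry r p q k m := by
  rw [sum_subset (show basisFinset r ⊆ _ from filter_subset _ _)
      fun x _ hx => by rw [hc x hx, zero_mul],
    sum_product, sum_eq_single_of_mem p (mem_Icc.2 ⟨by omega, by omega⟩)]
  intro p' hp' hne
  refine sum_eq_zero fun q _ => ?_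
  rw [mem_Icc] at hp'
  rcases lt_or_gt_of_ne hne with hlt | hgt
  · rw [Centry_eq_zero hp'.1 hk hk' hm hm' (by omega), mul_zero]
  · rw [habove (p', q) hgt, zero_mul]

theorem eq_zero_of_sum_smul_Cmat_eq_zero {c : ℤ × ℤ → ℂ} (hc : ∀ x ∉ basisFinset r, c x = 0)
    (h : ∑ x ∈ basisFinset r, c x • Cmat r x.1 x.2 = 0) : c = 0 := by
  have hentry : ∀ k m : ℤ, 1 ≤ k → k ≤ r - 1 → 1 ≤ m → m ≤ r - 1 →
      ∑ x ∈ basisFinset r, c x * Centry r x.1 x.2 k m = 0 := by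
    intro k m hk hk' hm hm'
    have := congrFun (congrFun h ⟨(k - 1).toNat, by omega⟩) ⟨(m - 1).toNat, by omega⟩
    simp only [Matrix.sum_apply, Matrix.smul_apply, smul_eq_mul, Cmat_apply,
      Matrix.zero_apply] at this
    rwa [show ((k - 1).toNat : ℤ) + 1 = k by omega,
      show ((m - 1).toNat : ℤ) + 1 = m by omega] at this
  by_contra hne
  obtain ⟨x₀, hx₀, hmax⟩ := exists_max_image ((basisFinset r).filter (c · ≠ 0)) Prod.fst <| by
    obtain ⟨x, hx⟩ := Function.ne_iff.1 hne
    exact ⟨x, mem_filter.2 ⟨not_imp_comm.1 (hc x) hx, hx⟩⟩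
  obtain ⟨p, q₀⟩ := x₀
  have hp₀ : 0 ≤ p := by have := mem_basisFinset.1 (mem_filter.1 hx₀).1; omega
  have habove : ∀ x : ℤ × ℤ, p < x.1 → c x = 0 := fun x hx => by_contra fun hcx =>
    (hmax x (mem_filter.2 ⟨not_imp_comm.1 (hc x) hcx, hcx⟩)).not_gt hx
  have hfiber : ∀ k m : ℤ, 1 ≤ k → k ≤ r - 1 → 1 ≤ m → m ≤ r - 1 → (m - k = p ∨ k - m = p) →
      ∑ q ∈ Icc (2 - r : ℤ) (r - 2), c (p, q) * Centry r p q k m = 0 :=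
    fun k m hk hk' hm hm' hkm =>
      (sum_basisFinset_eq_sum_fiber hc hp₀ habove hk hk' hm hm' hkm).symm.trans
        (hentry k m hk hk' hm hm')
  have hsupp : ∀ q, c (p, q) ≠ 0 → (p, q) ∈ basisFinset r := fun q => not_imp_comm.1 (hc _)
  have hfiber_zero : (fun q => c (p, q)) = 0 := by
    rcases hp₀.eq_or_lt with rfl | hp
    · exact fiber_eq_zero_of_zero (fun q hq => by have := mem_basisFinset.1 (hsupp q hq); omega)
        fun k hk hk' => hfiber k k hk hk' hk hk' (by omega)
    · exact fiber_eq_zero_of_pos hp (fun q hq => by have := mem_basisFinset.1 (hsupp q hq); omega)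
        hfiber
  exact (mem_filter.1 hx₀).2 (congrFun hfiber_zero q₀)

theorem Cmat_family_is_basis_general (r : ℕ) :
    LinearIndependent ℂ (fun i : BasisIdx r => Cmat r i.1.1 i.1.2) ∧
      Submodule.span ℂ (Set.range fun i : BasisIdx r => Cmat r i.1.1 i.1.2) = ⊤ := by
  have hli : LinearIndependent ℂ (fun i : BasisIdx r => Cmat r i.1.1 i.1.2) := by
    refine Fintype.linearIndependent_iff.2 fun g hg i => ?_
    set c : ℤ × ℤ → ℂ := Function.extend (fun i : BasisIdx r => i.1) g 0
    have hcg : ∀ i : BasisIdx r, c i.1 = g i := Subtype.val_injective.extend_apply g 0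
    have hc : ∀ x ∉ basisFinset r, c x = 0 := fun x hx =>
      Function.extend_apply' _ _ _ fun ⟨i, hi⟩ => hx (hi ▸ mem_basisFinset.2 i.2)
    have hsum : ∑ x ∈ basisFinset r, c x • Cmat r x.1 x.2 = 0 := by
      rw [sum_subtype (basisFinset r) (fun _ => mem_basisFinset)]
      exact (Fintype.sum_congr _ _ fun i => congrArg (· • _) (hcg i)).trans hg
    rw [← hcg, eq_zero_of_sum_smul_Cmat_eq_zero hc hsum, Pi.zero_apply]
  refine ⟨hli, hli.span_eq_top_of_card_eq_finrank' ?_⟩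
  rw [card_basisIdx, Module.finrank_matrix, Fintype.card_fin, Module.finrank_self, mul_one]

/-- The matrices `C(0,q)` for `0 ≤ q ≤ r−2` together with `C(p,q)` for `1 ≤ p ≤ r−2`,
`−r+p+2 ≤ q ≤ r−p−1` form a basis of the space of all `(r−1)×(r−1)` complex matrices. -/
theorem Cmat_family_is_basis (r : ℕ) (hr : 2 ≤ r) :
    LinearIndependent ℂ (fun i : BasisIdx r => Cmat r i.1.1 i.1.2) ∧
      Submodule.span ℂ (Set.range fun i : BasisIdx r => Cmat r i.1.1 i.1.2) = ⊤ :=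
  Cmat_family_is_basis_general r
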